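/- arXiv:2202.06081 — 3 statements merged into one kernel-verified Lean document; each statement's English description precedes it below -/
import Mathlib

section
/- Fix $\omega \in (1/2,1)$, $\beta \in (0,1)$, $\lambda \in [0,2]$. Let $g_k(\lambda) = (1-(1-\omega)\lambda)^k$ and define $f_l(\lambda) = (1-\beta)^l g_l(\lambda) + \beta \sum_{k=1}^{l} (1-\beta)^{k-1} g_k(\lambda)$. Then for every integer $l \ge 1$, $f_l(\lambda) \ge g_l(\lambda) > 0$. -/
theorem stmt_3 (ω β lam : ℝ) (hω : 1 / 2 < ω ∧ ω < 1) (hβ : 0 < β ∧ β < 1)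
    (hlam : 0 ≤ lam ∧ lam ≤ 2)
    (g f : ℕ → ℝ) (hg : ∀ k, g k = (1 - (1 - ω) * lam) ^ k)
    (hf : ∀ l, f l = (1 - β) ^ l * g l + β * ∑ k ∈ Finset.Icc 1 l, (1 - β) ^ (k - 1) * g k) :
    ∀ l : ℕ, 1 ≤ l → g l ≤ f l ∧ 0 < g l := by
  obtain ⟨hω1, hω2⟩ := hω
  obtain ⟨hβ1, hβ2⟩ := hβ
  obtain ⟨hl1, hl2⟩ := hlam
  set a : ℝ := 1 - (1 - ω) * lam with ha
  have ha0 : 0 < a := by nlinarith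
  have ha1 : a ≤ 1 := by nlinarith
  have hb0 : 0 ≤ 1 - β := by linarith
  intro l hl
  refine ⟨?_, by rw [hg]; exact pow_pos ha0 l⟩
  rw [hf, hg]
  have hsum : (∑ k ∈ Finset.Icc 1 l, (1 - β) ^ (k - 1)) * a ^ l
      ≤ ∑ k ∈ Finset.Icc 1 l, (1 - β) ^ (k - 1) * g k := by
    rw [Finset.sum_mul]
    refine Finset.sum_le_sum fun k hk => ?_
    rw [hg]
    have hkl : k ≤ l := (Finset.mem_Icc.mp hk).2
    exact mul_le_mul_of_nonneg_left (pow_le_pow_of_le_one ha0.le ha1 hkl)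
      (pow_nonneg hb0 _)
  have hgeom : ∀ n : ℕ, ∑ k ∈ Finset.Icc 1 n, (1 - β) ^ (k - 1) = (1 - (1 - β) ^ n) / β := by
    intro n
    induction n with
    | zero => simp
    | succ m ih =>
      rw [Finset.sum_Icc_succ_top (Nat.le_add_left 1 m), ih]
      simp only [Nat.add_sub_cancel]
      field_simp
      ring
  rw [hgeom l] at hsum
  have key : β * ((1 - (1 - β) ^ l) / β) = 1 - (1 - β) ^ l := by
    field_simp
  nlinarith [mul_le_mul_of_nonneg_left hsum hβ1.le, pow_pos ha0 l]
end

section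
/- Under the same setup (symmetric PSD $L$ with eigenvalues in $[0,2]$, $\omega \in (1/2,1)$, $\beta \in (0,1)$, $\Omega(h^{(0)}) > 0$), the diversity of the jumping convolution converges to a strictly positive limit: $\lim_{l\to\infty} \Omega(\tilde h^{(l)}) = \sum_i \Big(\frac{\beta(1-(1-\omega)\lambda_i)}{1-(1-\beta)(1-(1-\omega)\lambda_i)}\Big)^2 \lambda_i c_i^2 > 0$, where $c = U^\top h^{(0)}$. In particular $\lim_{l\to\infty}\Omega(\tilde h^{(l)}) > \lim_{l\to\infty}\Omega(h^{(l)}) = 0$, so jumping connections prevent over-smoothing. -/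
open Matrix Filter

theorem stmt_13 {n : ℕ} (L U F : Matrix (Fin n) (Fin n) ℝ) (lam : Fin n → ℝ)
    (ω β : ℝ) (hω : 1 / 2 < ω ∧ ω < 1) (hβ : 0 < β ∧ β < 1)
    (hU : U * Uᵀ = 1 ∧ Uᵀ * U = 1)
    (hLdecomp : L = U * Matrix.diagonal lam * Uᵀ)
    (hlam : ∀ i, 0 ≤ lam i ∧ lam i ≤ 2)
    (hF : F = 1 - (1 - ω) • L)
    (h0 : Fin n → ℝ) (hdiv : 0 < h0 ⬝ᵥ L.mulVec h0)
    (c : Fin n → ℝ) (hc : c = Uᵀ.mulVec h0)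
    (t : ℕ → Fin n → ℝ)
    (ht : ∀ l, t l = ((1 - β) ^ l • F ^ l +
        β • ∑ k ∈ Finset.Icc 1 l, (1 - β) ^ (k - 1) • F ^ k).mulVec h0) :
    Tendsto (fun l => t l ⬝ᵥ L.mulVec (t l)) atTop
      (nhds (∑ i, (β * (1 - (1 - ω) * lam i) /
        (1 - (1 - β) * (1 - (1 - ω) * lam i))) ^ 2 * lam i * c i ^ 2)) ∧
    0 < ∑ i, (β * (1 - (1 - ω) * lam i) /
        (1 - (1 - β) * (1 - (1 - ω) * lam i))) ^ 2 * lam i * c i ^ 2 := by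
  obtain ⟨hU1, hU2⟩ := hU
  -- μ : eigenvalues of F
  set μ : Fin n → ℝ := fun i => 1 - (1 - ω) * lam i with hμdef
  have hμpos : ∀ i, 0 < μ i := by
    intro i
    have h1 := (hlam i).1; have h2 := (hlam i).2
    simp only [hμdef]
    nlinarith [hω.1, hω.2]
  have hμle : ∀ i, μ i ≤ 1 := by
    intro i
    have h1 := (hlam i).1
    simp only [hμdef]
    nlinarith [hω.2]
  have hden : ∀ i, 0 < 1 - (1 - β) * μ i := by
    intro i
    nlinarith [hμpos i, hμle i, hβ.1, hβ.2]
  -- linear algebra helpers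
  have smul_conj : ∀ (a : ℝ) (d : Fin n → ℝ),
      a • (U * Matrix.diagonal d * Uᵀ) = U * Matrix.diagonal (fun i => a * d i) * Uᵀ := by
    intro a d
    rw [show (fun i => a * d i) = a • d from rfl, Matrix.diagonal_smul,
      Matrix.mul_smul, Matrix.smul_mul]
  have diag_sum : ∀ (s : Finset ℕ) (e : ℕ → Fin n → ℝ),
      ∑ k ∈ s, Matrix.diagonal (e k) = Matrix.diagonal (fun i => ∑ k ∈ s, e k i) := by
    intro s e
    ext i j
    by_cases h : i = j <;> simp [Matrix.sum_apply, Matrix.diagonal_apply, h]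
  have sum_conj : ∀ (s : Finset ℕ) (e : ℕ → Fin n → ℝ),
      ∑ k ∈ s, U * Matrix.diagonal (e k) * Uᵀ
        = U * Matrix.diagonal (fun i => ∑ k ∈ s, e k i) * Uᵀ := by
    intro s e
    rw [← diag_sum, Finset.mul_sum, Finset.sum_mul]
  have add_conj : ∀ (d e : Fin n → ℝ),
      U * Matrix.diagonal d * Uᵀ + U * Matrix.diagonal e * Uᵀ
        = U * Matrix.diagonal (fun i => d i + e i) * Uᵀ := by
    intro d e
    rw [show Matrix.diagonal (fun i => d i + e i)
        = Matrix.diagonal d + Matrix.diagonal e from (Matrix.diagonal_add d e).symm,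
      Matrix.mul_add, Matrix.add_mul]
  have conj_mul : ∀ (d e : Fin n → ℝ),
      (U * Matrix.diagonal d * Uᵀ) * (U * Matrix.diagonal e * Uᵀ)
        = U * Matrix.diagonal (fun i => d i * e i) * Uᵀ := by
    intro d e
    calc (U * Matrix.diagonal d * Uᵀ) * (U * Matrix.diagonal e * Uᵀ)
        = U * Matrix.diagonal d * ((Uᵀ * U) * (Matrix.diagonal e * Uᵀ)) := by
          simp only [Matrix.mul_assoc]
      _ = U * (Matrix.diagonal d * Matrix.diagonal e) * Uᵀ := by
          rw [hU2, Matrix.one_mul]; simp only [Matrix.mul_assoc]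
      _ = U * Matrix.diagonal (fun i => d i * e i) * Uᵀ := by
          rw [Matrix.diagonal_mul_diagonal]
  have conj_pow : ∀ (d : Fin n → ℝ) (k : ℕ),
      (U * Matrix.diagonal d * Uᵀ) ^ k = U * Matrix.diagonal (fun i => d i ^ k) * Uᵀ := by
    intro d k
    induction k with
    | zero =>
        simp only [pow_zero]
        rw [show Matrix.diagonal (fun _ : Fin n => (1:ℝ)) = 1 from Matrix.diagonal_one,
          Matrix.mul_one, hU1]
    | succ k ih =>
        rw [pow_succ, ih, conj_mul]
        have hfun : (fun i => d i ^ k * d i) = fun i => d i ^ (k + 1) := by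
          funext i; rw [pow_succ]
        rw [hfun]
  have hFdec : F = U * Matrix.diagonal μ * Uᵀ := by
    have hdiagμ : Matrix.diagonal μ = 1 - (1 - ω) • Matrix.diagonal lam := by
      ext i j
      by_cases h : i = j <;>
        simp [Matrix.diagonal_apply, Matrix.one_apply, h, hμdef]
    rw [hF, hLdecomp, hdiagμ, Matrix.mul_sub, Matrix.sub_mul, Matrix.mul_one, hU1,
      Matrix.mul_smul, Matrix.smul_mul]
  -- filter coefficients
  set g : ℕ → Fin n → ℝ := fun l i =>
    (1 - β) ^ l * μ i ^ l + β * ∑ k ∈ Finset.Icc 1 l, (1 - β) ^ (k - 1) * μ i ^ k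
    with hgdef
  have hM : ∀ l, (1 - β) ^ l • F ^ l +
      β • ∑ k ∈ Finset.Icc 1 l, (1 - β) ^ (k - 1) • F ^ k
        = U * Matrix.diagonal (g l) * Uᵀ := by
    intro l
    have h1 : (1 - β) ^ l • F ^ l
        = U * Matrix.diagonal (fun i => (1 - β) ^ l * μ i ^ l) * Uᵀ := by
      rw [hFdec, conj_pow, smul_conj]
    have h2 : (β : ℝ) • ∑ k ∈ Finset.Icc 1 l, (1 - β) ^ (k - 1) • F ^ k
        = U * Matrix.diagonal
            (fun i => β * ∑ k ∈ Finset.Icc 1 l, (1 - β) ^ (k - 1) * μ i ^ k) * Uᵀ := by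
      have : ∀ k, (1 - β) ^ (k - 1) • F ^ k
          = U * Matrix.diagonal (fun i => (1 - β) ^ (k - 1) * μ i ^ k) * Uᵀ := by
        intro k; rw [hFdec, conj_pow, smul_conj]
      simp only [this]
      rw [sum_conj, smul_conj]
    rw [h1, h2, add_conj]
  -- quadratic form
  have quad : ∀ d : Fin n → ℝ,
      h0 ⬝ᵥ (U * Matrix.diagonal d * Uᵀ).mulVec h0 = ∑ i, d i * c i ^ 2 := by
    intro d
    rw [← Matrix.mulVec_mulVec, ← Matrix.mulVec_mulVec, Matrix.dotProduct_mulVec,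
      ← Matrix.mulVec_transpose, ← hc]
    simp only [Matrix.mulVec_diagonal, dotProduct]
    exact Finset.sum_congr rfl fun i _ => by ring
  have hΩ : ∀ l, t l ⬝ᵥ L.mulVec (t l) = ∑ i, (g l i) ^ 2 * lam i * c i ^ 2 := by
    intro l
    rw [ht l, hM l]
    set M := U * Matrix.diagonal (g l) * Uᵀ with hMdef
    have hMsymm : Mᵀ = M := by
      simp only [hMdef, Matrix.transpose_mul, Matrix.diagonal_transpose,
        Matrix.transpose_transpose, Matrix.mul_assoc]
    have move : ∀ w, M.mulVec h0 ⬝ᵥ w = h0 ⬝ᵥ M.mulVec w := by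
      intro w
      rw [dotProduct_comm, Matrix.dotProduct_mulVec, dotProduct_comm,
        ← Matrix.mulVec_transpose, hMsymm]
    have hcollapse : M * L * M
        = U * Matrix.diagonal (fun i => g l i * lam i * g l i) * Uᵀ := by
      rw [hMdef, hLdecomp, conj_mul, conj_mul]
    have hstep : h0 ⬝ᵥ M.mulVec (L.mulVec (M.mulVec h0))
        = h0 ⬝ᵥ (M * L * M).mulVec h0 := by
      rw [Matrix.mulVec_mulVec h0 L M, Matrix.mulVec_mulVec h0 M (L * M),
        ← Matrix.mul_assoc]
    rw [move, hstep, hcollapse, quad]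
    exact Finset.sum_congr rfl fun i _ => by ring
  -- limits of filter coefficients
  have hgl : ∀ i, Tendsto (fun l => g l i) atTop
      (nhds (β * μ i / (1 - (1 - β) * μ i))) := by
    intro i
    set r : ℝ := (1 - β) * μ i with hrdef
    have hr0 : 0 ≤ r := mul_nonneg (by linarith [hβ.2]) (hμpos i).le
    have hr1 : r < 1 := by nlinarith [hden i]
    have hterm1 : Tendsto (fun l : ℕ => (1 - β) ^ l * μ i ^ l) atTop (nhds 0) := by
      have : (fun l : ℕ => (1 - β) ^ l * μ i ^ l) = fun l => r ^ l := by
        funext l; rw [hrdef, mul_pow]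
      rw [this]
      exact tendsto_pow_atTop_nhds_zero_of_lt_one hr0 hr1
    have hsum_eq : ∀ l : ℕ, ∑ k ∈ Finset.Icc 1 l, (1 - β) ^ (k - 1) * μ i ^ k
        = μ i * ∑ j ∈ Finset.range l, r ^ j := by
      intro l
      induction l with
      | zero => simp
      | succ l ih =>
          rw [Finset.sum_Icc_succ_top (by omega : 1 ≤ l + 1), ih,
            Finset.sum_range_succ, mul_add]
          congr 1
          simp only [Nat.add_sub_cancel, hrdef]
          rw [mul_pow, pow_succ]
          ring
    have hterm2 : Tendsto (fun l : ℕ =>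
        β * ∑ k ∈ Finset.Icc 1 l, (1 - β) ^ (k - 1) * μ i ^ k) atTop
        (nhds (β * (μ i * (1 - r)⁻¹))) := by
      simp only [hsum_eq]
      exact (((hasSum_geometric_of_lt_one hr0 hr1).tendsto_sum_nat).const_mul
        (μ i)).const_mul β
    have := hterm1.add hterm2
    rw [zero_add] at this
    have heq : β * (μ i * (1 - r)⁻¹) = β * μ i / (1 - (1 - β) * μ i) := by
      rw [hrdef]
      field_simp
    rw [heq] at this
    exact this
  -- main limit
  have hmain : Tendsto (fun l => t l ⬝ᵥ L.mulVec (t l)) atTop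
      (nhds (∑ i, (β * (1 - (1 - ω) * lam i) /
        (1 - (1 - β) * (1 - (1 - ω) * lam i))) ^ 2 * lam i * c i ^ 2)) := by
    have : Tendsto (fun l => ∑ i, (g l i) ^ 2 * lam i * c i ^ 2) atTop
        (nhds (∑ i, (β * μ i / (1 - (1 - β) * μ i)) ^ 2 * lam i * c i ^ 2)) := by
      refine tendsto_finset_sum _ fun i _ => ?_
      exact (((hgl i).pow 2).mul_const (lam i)).mul_const (c i ^ 2)
    have heq : (fun l => t l ⬝ᵥ L.mulVec (t l))
        = fun l => ∑ i, (g l i) ^ 2 * lam i * c i ^ 2 := funext hΩ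
    rw [heq]
    exact this
  refine ⟨hmain, ?_⟩
  -- positivity
  have hsum0 : h0 ⬝ᵥ L.mulVec h0 = ∑ i, lam i * c i ^ 2 := by
    rw [hLdecomp, quad]
  obtain ⟨i, hi⟩ : ∃ i, 0 < lam i * c i ^ 2 := by
    by_contra h
    push_neg at h
    have : ∑ i, lam i * c i ^ 2 ≤ 0 := Finset.sum_nonpos fun i _ => h i
    rw [hsum0] at hdiv
    linarith
  refine Finset.sum_pos' (fun j _ => ?_) ⟨i, Finset.mem_univ i, ?_⟩
  · exact mul_nonneg (mul_nonneg (sq_nonneg _) (hlam j).1) (sq_nonneg _)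
  · have hcoef : 0 < (β * (1 - (1 - ω) * lam i) /
        (1 - (1 - β) * (1 - (1 - ω) * lam i))) ^ 2 :=
      pow_pos (div_pos (mul_pos hβ.1 (hμpos i)) (hden i)) 2
    calc (0:ℝ) < (β * (1 - (1 - ω) * lam i) /
          (1 - (1 - β) * (1 - (1 - ω) * lam i))) ^ 2 * (lam i * c i ^ 2) :=
        mul_pos hcoef hi
      _ = _ := by ring
end

section
/- Let $L = U\Lambda U^\top$ be symmetric PSD with eigenvalues $\lambda_i \in [0,2]$, $\omega \in (1/2,1)$, $\beta \in (0,1)$, and $h^{(0)}$ with $(h^{(0)})^\top L h^{(0)} > 0$. With $h^{(l)}$ and $\tilde h^{(l)}$ defined as the plain and jumping graph convolution iterates, for every integer $l \ge 2$ one has the strict inequality $\Omega(\tilde h^{(l)}) > \Omega(h^{(l)})$, where $\Omega(h) = h^\top L h$. -/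
open Matrix

theorem stmt_14 {n : ℕ} (L U F : Matrix (Fin n) (Fin n) ℝ) (lam : Fin n → ℝ)
    (ω β : ℝ) (hω : 1 / 2 < ω ∧ ω < 1) (hβ : 0 < β ∧ β < 1)
    (hU : U * Uᵀ = 1 ∧ Uᵀ * U = 1)
    (hLdecomp : L = U * Matrix.diagonal lam * Uᵀ)
    (hlam : ∀ i, 0 ≤ lam i ∧ lam i ≤ 2)
    (hF : F = 1 - (1 - ω) • L)
    (h0 : Fin n → ℝ) (hdiv : 0 < h0 ⬝ᵥ L.mulVec h0)
    (h t : ℕ → Fin n → ℝ)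
    (hh : ∀ l, h l = (F ^ l).mulVec h0)
    (ht : ∀ l, t l = ((1 - β) ^ l • F ^ l +
        β • ∑ k ∈ Finset.Icc 1 l, (1 - β) ^ (k - 1) • F ^ k).mulVec h0) :
    ∀ l : ℕ, 2 ≤ l → h l ⬝ᵥ L.mulVec (h l) < t l ⬝ᵥ L.mulVec (t l) := by
  obtain ⟨hω1, hω2⟩ := hω
  obtain ⟨hβ1, hβ2⟩ := hβ
  set g : Fin n → ℝ := fun i => 1 - (1 - ω) * lam i with hgdef
  set c : Fin n → ℝ := Uᵀ.mulVec h0 with hcdef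
  -- conjugation multiplication
  have hmul : ∀ a b : Fin n → ℝ,
      (U * diagonal a * Uᵀ) * (U * diagonal b * Uᵀ)
        = U * diagonal (fun i => a i * b i) * Uᵀ := by
    intro a b
    have : Uᵀ * (U * diagonal b * Uᵀ) = diagonal b * Uᵀ := by
      rw [← Matrix.mul_assoc, ← Matrix.mul_assoc, hU.2, Matrix.one_mul]
    rw [Matrix.mul_assoc, this, ← Matrix.mul_assoc, Matrix.mul_assoc U,
      diagonal_mul_diagonal]
  -- quadratic form
  have quad : ∀ d : Fin n → ℝ,
      h0 ⬝ᵥ (U * diagonal d * Uᵀ).mulVec h0 = ∑ i, d i * c i ^ 2 := by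
    intro d
    rw [← mulVec_mulVec, ← mulVec_mulVec, dotProduct_mulVec]
    have h1 : U.vecMul h0 = c := by rw [hcdef, mulVec_transpose]
    rw [h1]
    simp only [dotProduct, mulVec_diagonal]
    exact Finset.sum_congr rfl fun i _ => by ring
  -- F as conjugated diagonal
  have hFd : F = U * diagonal g * Uᵀ := by
    rw [hF, hLdecomp]
    have : (diagonal g : Matrix (Fin n) (Fin n) ℝ)
        = 1 - (1 - ω) • diagonal lam := by
      rw [← diagonal_one, ← diagonal_smul, ← diagonal_sub]
      rfl
    rw [this, Matrix.mul_sub, Matrix.sub_mul, Matrix.mul_one, hU.1,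
      Matrix.mul_smul, Matrix.smul_mul]
  have hFpow : ∀ k : ℕ, F ^ k = U * diagonal (fun i => g i ^ k) * Uᵀ := by
    intro k
    induction k with
    | zero =>
      simp only [pow_zero]
      rw [show (diagonal fun _ : Fin n => (1:ℝ)) = 1 from diagonal_one,
        Matrix.mul_one, hU.1]
    | succ k ih =>
      rw [pow_succ, ih, hFd, hmul]
      congr 1
  -- diagonal of a sum
  have hdiagsum : ∀ (s : Finset ℕ) (d : ℕ → Fin n → ℝ),
      (diagonal (fun i => ∑ k ∈ s, d k i) : Matrix (Fin n) (Fin n) ℝ)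
        = ∑ k ∈ s, diagonal (d k) := by
    intro s d
    ext i j
    by_cases hij : i = j
    · subst hij; simp [Matrix.sum_apply]
    · simp [Matrix.sum_apply, diagonal_apply_ne _ hij]
  -- the matrix for t l
  set f : ℕ → Fin n → ℝ := fun l i =>
    (1 - β) ^ l * g i ^ l + β * ∑ k ∈ Finset.Icc 1 l, (1 - β) ^ (k - 1) * g i ^ k
    with hfdef
  have hM : ∀ l : ℕ,
      ((1 - β) ^ l • F ^ l + β • ∑ k ∈ Finset.Icc 1 l, (1 - β) ^ (k - 1) • F ^ k)
        = U * diagonal (f l) * Uᵀ := by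
    intro l
    have hsum : (∑ k ∈ Finset.Icc 1 l, (1 - β) ^ (k - 1) • F ^ k)
        = U * diagonal (fun i => ∑ k ∈ Finset.Icc 1 l, (1 - β) ^ (k - 1) * g i ^ k) * Uᵀ := by
      rw [hdiagsum]
      rw [Finset.mul_sum, Finset.sum_mul]
      refine Finset.sum_congr rfl fun k _ => ?_
      rw [hFpow k]
      rw [show (diagonal fun i => (1 - β) ^ (k - 1) * g i ^ k)
          = (1 - β) ^ (k - 1) • diagonal (fun i => g i ^ k) by
        rw [← diagonal_smul]; rfl]
      rw [Matrix.mul_smul, Matrix.smul_mul]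
    rw [hsum, hFpow l]
    rw [show (diagonal (f l) : Matrix (Fin n) (Fin n) ℝ)
        = (1 - β) ^ l • diagonal (fun i => g i ^ l)
          + β • diagonal (fun i => ∑ k ∈ Finset.Icc 1 l, (1 - β) ^ (k - 1) * g i ^ k) by
      rw [← diagonal_smul, ← diagonal_smul, diagonal_add]
      congr 1]
    rw [Matrix.mul_add, Matrix.add_mul]
    congr 1
    · rw [Matrix.mul_smul, Matrix.smul_mul]
    · rw [Matrix.mul_smul, Matrix.smul_mul]
  -- key: quadratic form of conjugated-diagonal image
  have key : ∀ a : Fin n → ℝ,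
      ((U * diagonal a * Uᵀ).mulVec h0) ⬝ᵥ L.mulVec ((U * diagonal a * Uᵀ).mulVec h0)
        = ∑ i, a i ^ 2 * lam i * c i ^ 2 := by
    intro a
    have hAT : (U * diagonal a * Uᵀ)ᵀ = U * diagonal a * Uᵀ := by
      rw [Matrix.transpose_mul, Matrix.transpose_mul, diagonal_transpose,
        transpose_transpose, Matrix.mul_assoc]
    have step : ((U * diagonal a * Uᵀ).mulVec h0) ⬝ᵥ L.mulVec ((U * diagonal a * Uᵀ).mulVec h0)
        = h0 ⬝ᵥ ((U * diagonal a * Uᵀ) * (L * (U * diagonal a * Uᵀ))).mulVec h0 := by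
      rw [mulVec_mulVec, dotProduct_mulVec, dotProduct_mulVec,
        ← vecMul_transpose, hAT, vecMul_vecMul]
    rw [step, hLdecomp, hmul, hmul, quad]
    refine Finset.sum_congr rfl fun i _ => by ring
  -- scalar facts
  have hg0 : ∀ i, 0 < g i := by
    intro i
    have := (hlam i).1
    have := (hlam i).2
    simp only [hgdef]
    nlinarith
  have hg1 : ∀ i, g i ≤ 1 := by
    intro i
    have := (hlam i).1
    simp only [hgdef]
    nlinarith
  have hgeom : ∀ l : ℕ, β * ∑ k ∈ Finset.Icc 1 l, (1 - β) ^ (k - 1) = 1 - (1 - β) ^ l := by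
    intro l
    induction l with
    | zero => simp
    | succ l ih =>
      rw [Finset.sum_Icc_succ_top (by omega : 1 ≤ l + 1)]
      rw [mul_add, ih]
      simp only [Nat.add_sub_cancel]
      ring
  have hfge : ∀ (l : ℕ) (i : Fin n), g i ^ l ≤ f l i := by
    intro l i
    have h1 : ∑ k ∈ Finset.Icc 1 l, (1 - β) ^ (k - 1) * g i ^ l
        ≤ ∑ k ∈ Finset.Icc 1 l, (1 - β) ^ (k - 1) * g i ^ k := by
      refine Finset.sum_le_sum fun k hk => ?_
      have hkl : k ≤ l := (Finset.mem_Icc.mp hk).2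
      have : g i ^ l ≤ g i ^ k := pow_le_pow_of_le_one (hg0 i).le (hg1 i) hkl
      have h1b : (0:ℝ) ≤ (1 - β) ^ (k - 1) := pow_nonneg (by linarith) _
      exact mul_le_mul_of_nonneg_left this h1b
    have h2 : (1 - (1 - β) ^ l) * g i ^ l
        ≤ β * ∑ k ∈ Finset.Icc 1 l, (1 - β) ^ (k - 1) * g i ^ k := by
      calc (1 - (1 - β) ^ l) * g i ^ l
          = β * ∑ k ∈ Finset.Icc 1 l, (1 - β) ^ (k - 1) * g i ^ l := by
            rw [← Finset.sum_mul, ← mul_assoc, hgeom]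
        _ ≤ _ := mul_le_mul_of_nonneg_left h1 hβ1.le
    simp only [hfdef]
    nlinarith
  have hfgt : ∀ (l : ℕ) (i : Fin n), 2 ≤ l → g i < 1 → g i ^ l < f l i := by
    intro l i hl hgi
    have h1 : ∑ k ∈ Finset.Icc 1 l, (1 - β) ^ (k - 1) * g i ^ l
        < ∑ k ∈ Finset.Icc 1 l, (1 - β) ^ (k - 1) * g i ^ k := by
      refine Finset.sum_lt_sum (fun k hk => ?_) ⟨1, Finset.mem_Icc.mpr ⟨le_refl 1, by omega⟩, ?_⟩
      · have hkl : k ≤ l := (Finset.mem_Icc.mp hk).2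
        have : g i ^ l ≤ g i ^ k := pow_le_pow_of_le_one (hg0 i).le (hg1 i) hkl
        have h1b : (0:ℝ) ≤ (1 - β) ^ (k - 1) := pow_nonneg (by linarith) _
        exact mul_le_mul_of_nonneg_left this h1b
      · have : g i ^ l < g i ^ 1 := pow_lt_pow_right_of_lt_one₀ (hg0 i) hgi (by omega)
        have h1b : (0:ℝ) < (1 - β) ^ (1 - 1) := by norm_num
        exact mul_lt_mul_of_pos_left this h1b
    have h2 : (1 - (1 - β) ^ l) * g i ^ l
        < β * ∑ k ∈ Finset.Icc 1 l, (1 - β) ^ (k - 1) * g i ^ k := by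
      calc (1 - (1 - β) ^ l) * g i ^ l
          = β * ∑ k ∈ Finset.Icc 1 l, (1 - β) ^ (k - 1) * g i ^ l := by
            rw [← Finset.sum_mul, ← mul_assoc, hgeom]
        _ < _ := mul_lt_mul_of_pos_left h1 hβ1
    simp only [hfdef]
    nlinarith
  -- existence of a strictly positive spectral coefficient
  have hL0 : h0 ⬝ᵥ L.mulVec h0 = ∑ i, lam i * c i ^ 2 := by
    rw [hLdecomp, quad]
  obtain ⟨i0, -, hi0⟩ : ∃ i ∈ Finset.univ, 0 < lam i * c i ^ 2 := by
    by_contra hcon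
    push_neg at hcon
    have : ∑ i, lam i * c i ^ 2 ≤ 0 :=
      Finset.sum_nonpos fun i hi => hcon i hi
    rw [hL0] at hdiv
    linarith
  have hlam0 : 0 < lam i0 := by
    rcases lt_or_eq_of_le (hlam i0).1 with h | h
    · exact h
    · exfalso; rw [← h] at hi0; simp at hi0
  have hgi0 : g i0 < 1 := by
    simp only [hgdef]
    nlinarith
  -- final
  intro l hl
  rw [hh, ht, hM, hFpow, key, key]
  refine Finset.sum_lt_sum (fun i _ => ?_) ⟨i0, Finset.mem_univ i0, ?_⟩
  · have h1 : (0:ℝ) ≤ g i ^ l := pow_nonneg (hg0 i).le l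
    have h2 : (g i ^ l) ^ 2 ≤ (f l i) ^ 2 := by nlinarith [hfge l i]
    have h3 : (0:ℝ) ≤ lam i * c i ^ 2 := mul_nonneg (hlam i).1 (sq_nonneg _)
    calc (g i ^ l) ^ 2 * lam i * c i ^ 2 = (g i ^ l) ^ 2 * (lam i * c i ^ 2) := by ring
      _ ≤ (f l i) ^ 2 * (lam i * c i ^ 2) := mul_le_mul_of_nonneg_right h2 h3
      _ = f l i ^ 2 * lam i * c i ^ 2 := by ring
  · have h1 : (0:ℝ) ≤ g i0 ^ l := pow_nonneg (hg0 i0).le l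
    have h2 : (g i0 ^ l) ^ 2 < (f l i0) ^ 2 := by nlinarith [hfgt l i0 hl hgi0]
    calc (g i0 ^ l) ^ 2 * lam i0 * c i0 ^ 2 = (g i0 ^ l) ^ 2 * (lam i0 * c i0 ^ 2) := by ring
      _ < (f l i0) ^ 2 * (lam i0 * c i0 ^ 2) := mul_lt_mul_of_pos_right h2 hi0
      _ = f l i0 ^ 2 * lam i0 * c i0 ^ 2 := by ring
end
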